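/- arXiv:1911.01931 — 3 statements merged into one kernel-verified Lean document; each statement's English description precedes it below -/
import Mathlib

section
/- Let A₁, A₂ be real r×r matrices, B₁, B₂ real r×d matrices, and define g_i : ℝ^{d×r} → ℝ by g_i(W) = tr(W A_i Wᵀ) − 2 tr(W B_i) for i = 1, 2. Let κ > 0, R > 0, and let W₁, W₂ ∈ ℝ^{d×r} satisfy ‖W₁‖_F ≤ R and ‖W₂‖_F ≤ R. Suppose g₂(W₁) − g₂(W₂) ≥ κ ‖W₁ − W₂‖_F² and g₁(W₁) ≤ g₁(W₂). Then κ ‖W₁ − W₂‖_F ≤ 2 (R ‖A₁ − A₂‖_F + ‖B₁ − B₂‖_F). In particular, if ‖A₁ − A₂‖_F ≤ C w and ‖B₁ − B₂‖_F ≤ C' w for constants C, C' and some w > 0, then ‖W₁ − W₂‖_F ≤ κ⁻¹ 2 (R C + C') w. -/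
/-!
Subtracting the two surrogates leaves the surrogate `W ↦ tr(W D Wᵀ) − 2 tr(W E)` of the
differences `D = A₂ − A₁`, `E = B₂ − B₁`. Since `W₁` does not increase `g₁`, the quadratic growth
`κ‖W₁ − W₂‖²` of `g₂` is bounded by the increment of this difference surrogate, and by
Cauchy–Schwarz for `tr(XY)` on the `R`-ball that increment is at most
`2‖W₁ − W₂‖(R‖D‖ + ‖E‖)`. Cancelling one factor `‖W₁ − W₂‖` gives the estimate.
-/

open Matrix

noncomputable def frobNorm {m n : ℕ} (M : Matrix (Fin m) (Fin n) ℝ) : ℝ :=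
  Real.sqrt (∑ i, ∑ j, (M i j) ^ 2)

attribute [local instance] Matrix.frobeniusSeminormedAddCommGroup

namespace Matrix

variable {m n : Type*} [Fintype m] [Fintype n]

theorem frobenius_norm_sq (A : Matrix m n ℝ) : ‖A‖ ^ 2 = ∑ i, ∑ j, A i j ^ 2 := by
  rw [frobenius_norm_def, ← Real.rpow_natCast, ← Real.rpow_mul (by positivity)]
  norm_num

theorem abs_trace_mul_le_frobenius_norm_mul (X : Matrix m n ℝ) (Y : Matrix n m ℝ) :
    |trace (X * Y)| ≤ ‖X‖ * ‖Y‖ := by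
  have hcs := Finset.sum_mul_sq_le_sq_mul_sq Finset.univ
    (fun p : m × n => X p.1 p.2) (fun p => Y p.2 p.1)
  simp only [Fintype.sum_prod_type] at hcs
  rw [Finset.sum_comm (f := fun i j => Y j i ^ 2), ← frobenius_norm_sq, ← frobenius_norm_sq,
    ← mul_pow] at hcs
  refine abs_le_of_sq_le_sq ?_ (by positivity)
  simpa [trace, mul_apply] using hcs

end Matrix

theorem frobNorm_eq_norm {m n : ℕ} (M : Matrix (Fin m) (Fin n) ℝ) : frobNorm M = ‖M‖ := by
  rw [frobNorm, ← frobenius_norm_sq, Real.sqrt_sq (norm_nonneg M)]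

section QuadSurrogate

variable {m n : Type*} [Fintype m] [Fintype n]

def quadSurrogate (A : Matrix n n ℝ) (B : Matrix n m ℝ) (W : Matrix m n ℝ) : ℝ :=
  (W * A * Wᵀ).trace - 2 * (W * B).trace

theorem quadSurrogate_sub_quadSurrogate (A₁ A₂ : Matrix n n ℝ) (B₁ B₂ : Matrix n m ℝ)
    (W : Matrix m n ℝ) :
    quadSurrogate A₂ B₂ W - quadSurrogate A₁ B₁ W = quadSurrogate (A₂ - A₁) (B₂ - B₁) W := by
  simp only [quadSurrogate, Matrix.mul_sub, Matrix.sub_mul, trace_sub]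
  ring

theorem quadSurrogate_sub_eq (A : Matrix n n ℝ) (B : Matrix n m ℝ) (W₁ W₂ : Matrix m n ℝ) :
    quadSurrogate A B W₁ - quadSurrogate A B W₂ =
      ((W₁ - W₂) * (A * W₁ᵀ)).trace + (W₂ * (A * (W₁ - W₂)ᵀ)).trace
        - 2 * ((W₁ - W₂) * B).trace := by
  simp only [quadSurrogate, Matrix.sub_mul, Matrix.mul_sub, transpose_sub, trace_sub,
    Matrix.mul_assoc]
  ring

theorem abs_quadSurrogate_sub_le (A : Matrix n n ℝ) (B : Matrix n m ℝ) (W₁ W₂ : Matrix m n ℝ) :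
    |quadSurrogate A B W₁ - quadSurrogate A B W₂| ≤
      ‖W₁ - W₂‖ * (‖A‖ * (‖W₁‖ + ‖W₂‖) + 2 * ‖B‖) := by
  have hmul (X : Matrix n n ℝ) (Y : Matrix m n ℝ) : ‖X * Yᵀ‖ ≤ ‖X‖ * ‖Y‖ := by
    simpa only [frobenius_norm_transpose] using frobenius_norm_mul X Yᵀ
  have h₁ := abs_trace_mul_le_frobenius_norm_mul (W₁ - W₂) (A * W₁ᵀ)
  have h₂ := abs_trace_mul_le_frobenius_norm_mul W₂ (A * (W₁ - W₂)ᵀ)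
  have h₃ := abs_trace_mul_le_frobenius_norm_mul (W₁ - W₂) B
  have h₁' := mul_le_mul_of_nonneg_left (hmul A W₁) (norm_nonneg (W₁ - W₂))
  have h₂' := mul_le_mul_of_nonneg_left (hmul A (W₁ - W₂)) (norm_nonneg W₂)
  rw [quadSurrogate_sub_eq]
  calc _ ≤ |((W₁ - W₂) * (A * W₁ᵀ)).trace| + |(W₂ * (A * (W₁ - W₂)ᵀ)).trace|
        + 2 * |((W₁ - W₂) * B).trace| := by
        refine (abs_sub _ _).trans ?_
        rw [abs_mul, abs_two]
        gcongr
        exact abs_add_le _ _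
    _ ≤ _ := by linarith

end QuadSurrogate

theorem mul_le_of_mul_sq_le_mul {κ t M : ℝ} (ht : 0 ≤ t) (hM : 0 ≤ M) (h : κ * t ^ 2 ≤ t * M) :
    κ * t ≤ M := by
  rcases ht.eq_or_lt with rfl | ht
  · simpa using hM
  · exact le_of_mul_le_mul_right (by linarith) ht

theorem norm_sub_le_of_quadSurrogate_growth {m n : Type*} [Fintype m] [Fintype n]
    (A₁ A₂ : Matrix n n ℝ) (B₁ B₂ : Matrix n m ℝ) {κ R : ℝ} {W₁ W₂ : Matrix m n ℝ}
    (hW₁ : ‖W₁‖ ≤ R) (hW₂ : ‖W₂‖ ≤ R)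
    (hgrow : κ * ‖W₁ - W₂‖ ^ 2 ≤ quadSurrogate A₂ B₂ W₁ - quadSurrogate A₂ B₂ W₂)
    (hmin : quadSurrogate A₁ B₁ W₁ ≤ quadSurrogate A₁ B₁ W₂) :
    κ * ‖W₁ - W₂‖ ≤ 2 * (R * ‖A₁ - A₂‖ + ‖B₁ - B₂‖) := by
  have hR : 0 ≤ R := (norm_nonneg W₁).trans hW₁
  have hdiff := (le_abs_self _).trans (abs_quadSurrogate_sub_le (A₂ - A₁) (B₂ - B₁) W₁ W₂)
  rw [← quadSurrogate_sub_quadSurrogate, ← quadSurrogate_sub_quadSurrogate] at hdiff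
  rw [norm_sub_rev A₁, norm_sub_rev B₁]
  refine mul_le_of_mul_sq_le_mul (norm_nonneg _) (by positivity) ?_
  calc κ * ‖W₁ - W₂‖ ^ 2 ≤ quadSurrogate A₂ B₂ W₁ - quadSurrogate A₂ B₂ W₂ := hgrow
    _ ≤ (quadSurrogate A₂ B₂ W₁ - quadSurrogate A₁ B₁ W₁)
          - (quadSurrogate A₂ B₂ W₂ - quadSurrogate A₁ B₁ W₂) := by linarith
    _ ≤ ‖W₁ - W₂‖ * (‖A₂ - A₁‖ * (‖W₁‖ + ‖W₂‖) + 2 * ‖B₂ - B₁‖) := hdiff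
    _ ≤ ‖W₁ - W₂‖ * (2 * (R * ‖A₂ - A₁‖ + ‖B₂ - B₁‖)) := by
          gcongr
          linarith [mul_le_mul_of_nonneg_left (add_le_add hW₁ hW₂) (norm_nonneg (A₂ - A₁))]

theorem stmt5_general {r d : ℕ} (A₁ A₂ : Matrix (Fin r) (Fin r) ℝ) (B₁ B₂ : Matrix (Fin r) (Fin d) ℝ)
    (g₁ g₂ : Matrix (Fin d) (Fin r) ℝ → ℝ)
    (hg₁ : ∀ W, g₁ W = (W * A₁ * Wᵀ).trace - 2 * (W * B₁).trace)
    (hg₂ : ∀ W, g₂ W = (W * A₂ * Wᵀ).trace - 2 * (W * B₂).trace)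
    (κ R : ℝ) (hκ : 0 < κ)
    (W₁ W₂ : Matrix (Fin d) (Fin r) ℝ)
    (hW₁ : frobNorm W₁ ≤ R) (hW₂ : frobNorm W₂ ≤ R)
    (hgrow : κ * frobNorm (W₁ - W₂) ^ 2 ≤ g₂ W₁ - g₂ W₂)
    (hmin : g₁ W₁ ≤ g₁ W₂) :
    κ * frobNorm (W₁ - W₂) ≤ 2 * (R * frobNorm (A₁ - A₂) + frobNorm (B₁ - B₂)) ∧
      ∀ C C' w : ℝ, 0 < w → frobNorm (A₁ - A₂) ≤ C * w → frobNorm (B₁ - B₂) ≤ C' * w →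
        frobNorm (W₁ - W₂) ≤ κ⁻¹ * 2 * (R * C + C') * w := by
  obtain rfl : g₁ = quadSurrogate A₁ B₁ := funext hg₁
  obtain rfl : g₂ = quadSurrogate A₂ B₂ := funext hg₂
  simp only [frobNorm_eq_norm] at *
  have hstable := norm_sub_le_of_quadSurrogate_growth A₁ A₂ B₁ B₂ hW₁ hW₂ hgrow hmin
  refine ⟨hstable, fun C C' w _ hA hB => ?_⟩
  have hR : 0 ≤ R := (norm_nonneg W₁).trans hW₁
  rw [mul_assoc, mul_assoc, le_inv_mul_iff₀ hκ]
  calc κ * ‖W₁ - W₂‖ ≤ 2 * (R * ‖A₁ - A₂‖ + ‖B₁ - B₂‖) := hstable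
    _ ≤ 2 * (R * (C * w) + C' * w) := by gcongr
    _ = 2 * ((R * C + C') * w) := by ring

/-- deterministic core of the iterate-stability estimate.
If `g₂` grows quadratically from `W₂` to `W₁` with constant `κ` and `g₁(W₁) ≤ g₁(W₂)`,
then `κ‖W₁−W₂‖_F ≤ 2(R‖A₁−A₂‖_F + ‖B₁−B₂‖_F)`; in particular, if
`‖A₁−A₂‖_F ≤ Cw` and `‖B₁−B₂‖_F ≤ C'w`, then `‖W₁−W₂‖_F ≤ κ⁻¹·2(RC + C')w`. -/
theorem stmt5 {r d : ℕ} (A₁ A₂ : Matrix (Fin r) (Fin r) ℝ) (B₁ B₂ : Matrix (Fin r) (Fin d) ℝ)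
    (g₁ g₂ : Matrix (Fin d) (Fin r) ℝ → ℝ)
    (hg₁ : ∀ W, g₁ W = (W * A₁ * Wᵀ).trace - 2 * (W * B₁).trace)
    (hg₂ : ∀ W, g₂ W = (W * A₂ * Wᵀ).trace - 2 * (W * B₂).trace)
    (κ R : ℝ) (hκ : 0 < κ) (hR : 0 < R)
    (W₁ W₂ : Matrix (Fin d) (Fin r) ℝ)
    (hW₁ : frobNorm W₁ ≤ R) (hW₂ : frobNorm W₂ ≤ R)
    (hgrow : κ * frobNorm (W₁ - W₂) ^ 2 ≤ g₂ W₁ - g₂ W₂)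
    (hmin : g₁ W₁ ≤ g₁ W₂) :
    κ * frobNorm (W₁ - W₂) ≤ 2 * (R * frobNorm (A₁ - A₂) + frobNorm (B₁ - B₂)) ∧
      ∀ C C' w : ℝ, 0 < w → frobNorm (A₁ - A₂) ≤ C * w → frobNorm (B₁ - B₂) ≤ C' * w →
        frobNorm (W₁ - W₂) ≤ κ⁻¹ * 2 * (R * C + C') * w :=
  stmt5_general A₁ A₂ B₁ B₂ g₁ g₂ hg₁ hg₂ κ R hκ W₁ W₂ hW₁ hW₂ hgrow hmin
end

section
/- Let (a_n)_{n ≥ 0} and (b_n)_{n ≥ 0} be sequences of nonnegative real numbers such that ∑_{n=0}^∞ a_n = ∞, ∑_{n=0}^∞ a_n b_n < ∞, and there is a constant K > 0 with |b_{n+1} − b_n| ≤ K a_n for all n. Then lim_{n→∞} b_n = 0. -/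
/-- Mairal's deterministic lemma: if `a_n, b_n ≥ 0`,
`∑ a_n = ∞`, `∑ a_n b_n < ∞`, and `|b_{n+1} − b_n| ≤ K a_n` for some `K > 0`,
then `b_n → 0`. -/
theorem stmt11 (a b : ℕ → ℝ) (ha : ∀ n, 0 ≤ a n) (hb : ∀ n, 0 ≤ b n)
    (hdiv : Filter.Tendsto (fun N => ∑ n ∈ Finset.range N, a n) Filter.atTop Filter.atTop)
    (hsum : Summable fun n => a n * b n)
    (K : ℝ) (hK : 0 < K)
    (hinc : ∀ n, |b (n + 1) - b n| ≤ K * a n) :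
    Filter.Tendsto b Filter.atTop (nhds 0) := by
  classical
  rw [Metric.tendsto_atTop]
  intro ε hε
  have hS : CauchySeq (fun N => ∑ n ∈ Finset.range N, a n * b n) :=
    hsum.hasSum.tendsto_sum_nat.cauchySeq
  have hδ : 0 < ε ^ 2 / (8 * K) := by positivity
  obtain ⟨N, hN⟩ := Metric.cauchySeq_iff.mp hS _ hδ
  refine ⟨N, fun m hm => ?_⟩
  rw [Real.dist_eq, sub_zero, abs_of_nonneg (hb m)]
  by_contra hbm
  push_neg at hbm
  -- Step 1: there is some `n > m` with `b n < ε/2`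
  have hex : ∃ n, m < n ∧ b n < ε / 2 := by
    by_contra h
    push_neg at h
    have hsa : Summable a := by
      rw [← summable_nat_add_iff (m + 1)]
      refine Summable.of_nonneg_of_le (fun n => ha _) (fun n => ?_)
        (((summable_nat_add_iff (m + 1)).mpr hsum).mul_left (2 / ε))
      have hbn : ε / 2 ≤ b (n + (m + 1)) := h _ (by omega)
      have han := ha (n + (m + 1))
      calc a (n + (m + 1)) = 2 / ε * (a (n + (m + 1)) * (ε / 2)) := by
            field_simp
        _ ≤ 2 / ε * (a (n + (m + 1)) * b (n + (m + 1))) := by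
            apply mul_le_mul_of_nonneg_left _ (by positivity)
            exact mul_le_mul_of_nonneg_left hbn han
    exact not_tendsto_nhds_of_tendsto_atTop hdiv _ hsa.hasSum.tendsto_sum_nat
  -- Step 2: take the minimal such `n`
  obtain ⟨n1, hn1⟩ := hex
  have hP : ∃ n, m < n ∧ b n < ε / 2 := ⟨n1, hn1⟩
  set n0 := Nat.find hP with hn0def
  obtain ⟨hmn0, hbn0⟩ := Nat.find_spec hP
  have hge : ∀ k ∈ Finset.Ico m n0, ε / 2 ≤ b k := by
    intro k hk
    rw [Finset.mem_Ico] at hk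
    rcases eq_or_lt_of_le hk.1 with h | h
    · rw [← h]; linarith
    · have := Nat.find_min hP hk.2
      push_neg at this
      exact this h
  -- telescoping
  have htel : ∑ k ∈ Finset.Ico m n0, (b (k + 1) - b k) = b n0 - b m := by
    rw [Finset.sum_Ico_eq_sub _ hmn0.le,
      Finset.sum_range_sub (fun i => b i), Finset.sum_range_sub (fun i => b i)]
    ring
  have h1 : ε / 2 ≤ K * ∑ k ∈ Finset.Ico m n0, a k := by
    have habs : b m - b n0 ≤ ∑ k ∈ Finset.Ico m n0, |b (k + 1) - b k| := by
      calc b m - b n0 = ∑ k ∈ Finset.Ico m n0, -(b (k + 1) - b k) := by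
            rw [Finset.sum_neg_distrib, htel]; ring
        _ ≤ ∑ k ∈ Finset.Ico m n0, |b (k + 1) - b k| :=
            Finset.sum_le_sum fun k _ => neg_le_abs _
    calc ε / 2 ≤ b m - b n0 := by linarith
      _ ≤ ∑ k ∈ Finset.Ico m n0, |b (k + 1) - b k| := habs
      _ ≤ ∑ k ∈ Finset.Ico m n0, K * a k := Finset.sum_le_sum fun k _ => hinc k
      _ = K * ∑ k ∈ Finset.Ico m n0, a k := by rw [Finset.mul_sum]
  have h2 : ε ^ 2 / (4 * K) ≤ ∑ k ∈ Finset.Ico m n0, a k * b k := by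
    have : ∑ k ∈ Finset.Ico m n0, a k * (ε / 2) ≤ ∑ k ∈ Finset.Ico m n0, a k * b k :=
      Finset.sum_le_sum fun k hk => mul_le_mul_of_nonneg_left (hge k hk) (ha k)
    have hsum2 : ∑ k ∈ Finset.Ico m n0, a k * (ε / 2)
        = (ε / 2) * ∑ k ∈ Finset.Ico m n0, a k := by
      rw [Finset.mul_sum]; exact Finset.sum_congr rfl fun k _ => mul_comm _ _
    have hA : ε / (2 * K) ≤ ∑ k ∈ Finset.Ico m n0, a k := by
      rw [div_le_iff₀ (by positivity)]
      calc ε = 2 * (ε / 2) := by ring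
        _ ≤ 2 * (K * ∑ k ∈ Finset.Ico m n0, a k) := by linarith
        _ = (∑ k ∈ Finset.Ico m n0, a k) * (2 * K) := by ring
    calc ε ^ 2 / (4 * K) = (ε / 2) * (ε / (2 * K)) := by ring
      _ ≤ (ε / 2) * ∑ k ∈ Finset.Ico m n0, a k :=
        mul_le_mul_of_nonneg_left hA (by positivity)
      _ = ∑ k ∈ Finset.Ico m n0, a k * (ε / 2) := hsum2.symm
      _ ≤ _ := this
  -- contradiction with the Cauchy property
  have hNn0 : N ≤ n0 := le_trans hm hmn0.le
  have hd := hN n0 hNn0 m hm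
  rw [Real.dist_eq] at hd
  have hsub : ∑ k ∈ Finset.range n0, a k * b k - ∑ k ∈ Finset.range m, a k * b k
      = ∑ k ∈ Finset.Ico m n0, a k * b k :=
    (Finset.sum_Ico_eq_sub _ hmn0.le).symm
  have hnonneg : 0 ≤ ∑ k ∈ Finset.Ico m n0, a k * b k :=
    Finset.sum_nonneg fun k _ => mul_nonneg (ha k) (hb k)
  rw [hsub, abs_of_nonneg hnonneg] at hd
  have : ε ^ 2 / (4 * K) < ε ^ 2 / (8 * K) := lt_of_le_of_lt h2 hd
  have : ε ^ 2 / (8 * K) < ε ^ 2 / (4 * K) := by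
    apply div_lt_div_of_pos_left (by positivity) (by positivity) (by linarith)
  linarith
end

section
/- Fix t ≥ 1 and real numbers ℓ₁, …, ℓ_t and f. Let w₁, …, w_t ∈ (0,1] with w₁ = 1. For 1 ≤ s ≤ t define w_s^t := w_s ∏_{j=s+1}^{t} (1 − w_j), and set w₀^t := 0. Define f_t := ∑_{s=1}^{t} w_s^t ℓ_s and, for 1 ≤ i ≤ t, F_i := (t − i + 1)⁻¹ ∑_{s=i}^{t} ℓ_s. Then ∑_{s=1}^{t} w_s^t = 1, and f_t − f = ∑_{i=1}^{t} (w_i^t − w_{i−1}^t)(t − i + 1)(F_i − f). -/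
/-!
With the tail products `P s = ∏_{j=s+1}^t (1 - w j)`, the weight `w_s^t` is the increment
`P s - P (s - 1)`, so the weights telescope to `P t - P 0 = 1`; the factor `1 - w 1 = 0` kills `P 0`.
Since `(t - i + 1) (F i - f) = ∑_{s=i}^t (ℓ s - f)`, summation by parts turns the right-hand side
into `∑_s w_s^t (ℓ s - f) = f_t - f`.
-/

open Finset

theorem Finset.sum_Icc_one_sub_pred {M : Type*} [AddCommGroup M] (a : ℕ → M) (n : ℕ) :
    ∑ i ∈ Icc 1 n, (a i - a (i - 1)) = a n - a 0 := by
  induction n with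
  | zero => simp
  | succ n ih =>
    rw [sum_Icc_succ_top (by omega), ih, Nat.add_sub_cancel]
    abel

theorem Finset.sum_Icc_sub_pred_mul_sum_Icc {R : Type*} [Ring R] (a g : ℕ → R) (n : ℕ) :
    ∑ i ∈ Icc 1 n, (a i - a (i - 1)) * ∑ s ∈ Icc i n, g s =
      ∑ s ∈ Icc 1 n, (a s - a 0) * g s := by
  simp_rw [mul_sum]
  rw [sum_comm' (t' := Icc 1 n) (s' := fun s => Icc 1 s) (by intros; simp only [mem_Icc]; omega)]
  refine sum_congr rfl fun s _ => ?_
  rw [← sum_mul, sum_Icc_one_sub_pred]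

theorem mul_prod_Icc_one_sub {R : Type*} [CommRing R] (w : ℕ → R) {s t : ℕ} (hst : s ≤ t) :
    w s * ∏ j ∈ Icc (s + 1) t, (1 - w j) =
      ∏ j ∈ Icc (s + 1) t, (1 - w j) - ∏ j ∈ Icc s t, (1 - w j) := by
  rw [← insert_Icc_add_one_left_eq_Icc hst, prod_insert (by simp)]
  ring

theorem sum_mul_prod_Icc_one_sub {R : Type*} [CommRing R] (w : ℕ → R) (t : ℕ) :
    ∑ s ∈ Icc 1 t, w s * ∏ j ∈ Icc (s + 1) t, (1 - w j) = 1 - ∏ j ∈ Icc 1 t, (1 - w j) := by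
  have hstep : ∀ s ∈ Icc 1 t, w s * ∏ j ∈ Icc (s + 1) t, (1 - w j) =
      ∏ j ∈ Icc (s + 1) t, (1 - w j) - ∏ j ∈ Icc (s - 1 + 1) t, (1 - w j) := by
    intro s hs
    obtain ⟨hs1, hst⟩ := mem_Icc.1 hs
    rw [mul_prod_Icc_one_sub w hst, Nat.sub_add_cancel hs1]
  rw [sum_congr rfl hstep, sum_Icc_one_sub_pred (fun s => ∏ j ∈ Icc (s + 1) t, (1 - w j))]
  simp

theorem Finset.natCast_card_mul_average_sub {K : Type*} [Field K] [CharZero K] {ι : Type*}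
    {S : Finset ι} (hS : S.Nonempty) (ℓ : ι → K) (c : K) :
    (#S : K) * ((#S : K)⁻¹ * ∑ s ∈ S, ℓ s - c) = ∑ s ∈ S, (ℓ s - c) := by
  have hcard : (#S : K) ≠ 0 := by exact_mod_cast hS.card_ne_zero
  rw [sum_sub_distrib, sum_const, nsmul_eq_mul, mul_sub, mul_inv_cancel_left₀ hcard]

theorem stmt13_general (t : ℕ) (ht : 1 ≤ t) (ℓ : ℕ → ℝ) (f : ℝ)
    (w : ℕ → ℝ) (hw1 : w 1 = 1)
    (wst : ℕ → ℝ) (hwst0 : wst 0 = 0)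
    (hwst : ∀ s, 1 ≤ s → s ≤ t → wst s = w s * ∏ j ∈ Finset.Icc (s + 1) t, (1 - w j))
    (ft : ℝ) (hft : ft = ∑ s ∈ Finset.Icc 1 t, wst s * ℓ s)
    (F : ℕ → ℝ)
    (hF : ∀ i, 1 ≤ i → i ≤ t → F i = ((t - i + 1 : ℕ) : ℝ)⁻¹ * ∑ s ∈ Finset.Icc i t, ℓ s) :
    (∑ s ∈ Finset.Icc 1 t, wst s = 1) ∧
      ft - f = ∑ i ∈ Finset.Icc 1 t,
        (wst i - wst (i - 1)) * ((t - i + 1 : ℕ) : ℝ) * (F i - f) := by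
  have hsum : ∑ s ∈ Icc 1 t, wst s = 1 := by
    rw [sum_congr rfl fun s hs => hwst s (mem_Icc.1 hs).1 (mem_Icc.1 hs).2,
      sum_mul_prod_Icc_one_sub, prod_eq_zero (mem_Icc.2 ⟨le_rfl, ht⟩) (by rw [hw1, sub_self]),
      sub_zero]
  refine ⟨hsum, ?_⟩
  have htail : ∀ i ∈ Icc 1 t, (wst i - wst (i - 1)) * ((t - i + 1 : ℕ) : ℝ) * (F i - f) =
      (wst i - wst (i - 1)) * ∑ s ∈ Icc i t, (ℓ s - f) := by
    intro i hi
    obtain ⟨hi1, hit⟩ := mem_Icc.1 hi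
    have hcard : t - i + 1 = #(Icc i t) := by rw [Nat.card_Icc]; omega
    rw [mul_assoc, hF i hi1 hit, hcard, natCast_card_mul_average_sub (nonempty_Icc.2 hit)]
  rw [sum_congr rfl htail, sum_Icc_sub_pred_mul_sum_Icc, hwst0, hft]
  simp only [sub_zero, mul_sub, sum_sub_distrib, ← sum_mul, hsum, one_mul]

/-- summation-by-parts identity for weighted empirical averages.
With `w_s^t = w_s ∏_{j=s+1}^t (1 − w_j)`, `w_0^t = 0`, `f_t = ∑_s w_s^t ℓ_s`,
and tail averages `F_i = (t−i+1)⁻¹ ∑_{s=i}^t ℓ_s`, one has `∑_s w_s^t = 1` and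
`f_t − f = ∑_{i=1}^t (w_i^t − w_{i−1}^t)(t−i+1)(F_i − f)`. -/
theorem stmt13 (t : ℕ) (ht : 1 ≤ t) (ℓ : ℕ → ℝ) (f : ℝ)
    (w : ℕ → ℝ) (hw : ∀ s, 1 ≤ s → s ≤ t → 0 < w s ∧ w s ≤ 1) (hw1 : w 1 = 1)
    (wst : ℕ → ℝ) (hwst0 : wst 0 = 0)
    (hwst : ∀ s, 1 ≤ s → s ≤ t → wst s = w s * ∏ j ∈ Finset.Icc (s + 1) t, (1 - w j))
    (ft : ℝ) (hft : ft = ∑ s ∈ Finset.Icc 1 t, wst s * ℓ s)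
    (F : ℕ → ℝ)
    (hF : ∀ i, 1 ≤ i → i ≤ t → F i = ((t - i + 1 : ℕ) : ℝ)⁻¹ * ∑ s ∈ Finset.Icc i t, ℓ s) :
    (∑ s ∈ Finset.Icc 1 t, wst s = 1) ∧
      ft - f = ∑ i ∈ Finset.Icc 1 t,
        (wst i - wst (i - 1)) * ((t - i + 1 : ℕ) : ℝ) * (F i - f) :=
  stmt13_general t ht ℓ f w hw1 wst hwst0 hwst ft hft F hF
end
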